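/- arXiv:1607.05118 — 2 statements merged into one kernel-verified Lean document; each statement's English description precedes it below -/
import Mathlib

section
/- Let ω be a real number with 0 < ω < 1 and let λ = √(1 - ω²) (or λ = -√(1 - ω²)). Define ψ(θ, τ) = e^{-λτ}/(1 - λ·cos θ) for θ ∈ [-π, π] and τ ∈ ℝ. Then for all such θ and τ, cos θ · ∂ψ/∂τ (θ, τ) + ψ(θ, τ) = (ω/(2π)) ∫_{-π}^{π} ψ(θ', τ) dθ'. -/
/-!
Writing `λ² = 1 - ω²`, the mode satisfies `cos θ · ∂ψ/∂τ + ψ = e^{-λτ}`, so the claim reduces to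
the classical integral `∫_{-π}^{π} dθ / (a + b cos θ) = 2π / √(a² - b²)` for `|b| < a`, taken at
`a = 1`, `b = -λ`, where `√(1 - λ²) = ω`.
-/

open Real MeasureTheory

lemma add_mul_cos_pos {a b : ℝ} (h : |b| < a) (x : ℝ) : 0 < a + b * cos x := by
  have : |b * cos x| ≤ |b| := by
    rw [abs_mul]
    exact mul_le_of_le_one_right (abs_nonneg b) (abs_cos_le_one x)
  linarith [neg_abs_le (b * cos x)]

/-- On `(-π, π)` this agrees with the Weierstrass-substitution primitive
`(2/s) arctan (√((a-b)/(a+b)) tan (x/2))`, `s = √(a² - b²)`, but unlike it is smooth on all of `ℝ`,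
so the fundamental theorem of calculus applies across `±π`. -/
lemma hasDerivAt_inv_add_mul_cos_primitive {a b : ℝ} (h : |b| < a) (x : ℝ) :
    HasDerivAt
      (fun x => (x + 2 * arctan (-b * sin x / (a + √(a ^ 2 - b ^ 2) + b * cos x))) /
        √(a ^ 2 - b ^ 2))
      (a + b * cos x)⁻¹ x := by
  set s := √(a ^ 2 - b ^ 2)
  have hs : 0 < s := sqrt_pos.2 (by nlinarith [abs_nonneg b, sq_abs b])
  have hs2 : s ^ 2 = a ^ 2 - b ^ 2 := sq_sqrt (by nlinarith [abs_nonneg b, sq_abs b])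
  have hpos : 0 < a + b * cos x := add_mul_cos_pos h x
  have hD : 0 < a + s + b * cos x := by linarith
  have has : 0 < a + s := by linarith [abs_nonneg b]
  have hsc := sin_sq_add_cos_sq x
  have hsin : HasDerivAt (fun x => -b * sin x) (-b * cos x) x := (hasDerivAt_sin x).const_mul _
  have hden : HasDerivAt (fun x => a + s + b * cos x) (b * -sin x) x :=
    ((hasDerivAt_cos x).const_mul b).const_add _
  have harctan : HasDerivAt (fun y => arctan (-b * sin y / (a + s + b * cos y)))
      ((1 + (-b * sin x / (a + s + b * cos x)) ^ 2)⁻¹ *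
        ((-b * cos x * (a + s + b * cos x) - -b * sin x * (b * -sin x)) /
          (a + s + b * cos x) ^ 2)) x := by
    simpa only [one_div, Pi.div_apply] using (hsin.div hden hD.ne').arctan
  have hnorm : 1 + (-b * sin x / (a + s + b * cos x)) ^ 2
      = 2 * (a + s) * (a + b * cos x) / (a + s + b * cos x) ^ 2 := by
    field_simp
    linear_combination b ^ 2 * hsc + hs2
  have hnum : -b * cos x * (a + s + b * cos x) - -b * sin x * (b * -sin x)
      = -(a + s) * (b * cos x + a - s) := by
    linear_combination (-b ^ 2) * hsc - hs2
  refine (((hasDerivAt_id x).add (harctan.const_mul 2)).div_const s).congr_deriv ?_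
  rw [hnorm, hnum]
  field_simp
  ring

theorem integral_inv_add_mul_cos {a b : ℝ} (h : |b| < a) :
    ∫ x in (-π)..π, (a + b * cos x)⁻¹ = 2 * π / √(a ^ 2 - b ^ 2) := by
  have hcont : Continuous fun x => (a + b * cos x)⁻¹ :=
    (by fun_prop : Continuous fun x => a + b * cos x).inv₀ fun x => (add_mul_cos_pos h x).ne'
  rw [intervalIntegral.integral_eq_sub_of_hasDerivAt
    (fun x _ => hasDerivAt_inv_add_mul_cos_primitive h x) (hcont.intervalIntegrable _ _)]
  simp only [sin_pi, sin_neg, neg_zero, mul_zero, zero_div, arctan_zero]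
  ring

/-- Free modes of the two-dimensional transport equation (Eq. (34)): for
single-scattering albedo `0 < ω < 1` and `λ = ±√(1-ω²)`, the flux
`ψ(θ,τ) = e^{-λτ}/(1 - λ cos θ)` satisfies the source-free Boltzmann equation
`cos θ · ∂ψ/∂τ + ψ = (ω/(2π)) ∫_{-π}^{π} ψ(θ',τ) dθ'`. -/
theorem free_mode_solves_transport (ω : ℝ) (hω0 : 0 < ω) (hω1 : ω < 1) (l : ℝ)
    (hl : l = Real.sqrt (1 - ω ^ 2) ∨ l = -Real.sqrt (1 - ω ^ 2)) :
    ∀ θ ∈ Set.Icc (-π) π, ∀ τ : ℝ,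
      Real.cos θ * deriv (fun t : ℝ => Real.exp (-l * t) / (1 - l * Real.cos θ)) τ +
          Real.exp (-l * τ) / (1 - l * Real.cos θ) =
        (ω / (2 * π)) * ∫ θ' in (-π)..π, Real.exp (-l * τ) / (1 - l * Real.cos θ') := by
  intro θ _ τ
  have hl2 : l ^ 2 = 1 - ω ^ 2 := by
    rcases hl with rfl | rfl <;> simp only [neg_sq, sq_sqrt (by nlinarith : 0 ≤ 1 - ω ^ 2)]
  have habs : |-l| < 1 := by
    rw [abs_neg, ← sq_lt_one_iff_abs_lt_one]
    nlinarith
  have hint : ∫ x in (-π)..π, (1 - l * cos x)⁻¹ = 2 * π / ω := by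
    have := integral_inv_add_mul_cos habs
    rw [neg_sq, hl2, one_pow, sub_sub_cancel, sqrt_sq hω0.le] at this
    simpa only [neg_mul, ← sub_eq_add_neg] using this
  have hc : 1 - l * cos θ ≠ 0 := by
    simpa [sub_eq_add_neg] using (add_mul_cos_pos habs θ).ne'
  have hderiv : deriv (fun t => exp (-l * t) / (1 - l * cos θ)) τ
      = exp (-l * τ) * -l / (1 - l * cos θ) :=
    ((((hasDerivAt_id τ).const_mul (-l)).exp).div_const _).deriv.trans (by simp)
  simp_rw [hderiv, div_eq_mul_inv (exp (-l * τ)), intervalIntegral.integral_const_mul, hint]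
  calc _ = exp (-l * τ) * ((1 - l * cos θ) / (1 - l * cos θ)) := by ring
    _ = _ := by rw [div_self hc]; field_simp
end

section
/- Let ω be a real number with 0 < ω < 1 and let s be a real number with s > -1. Then the function ϑ ↦ ϑ · cot ϑ · csc²ϑ / [ (s + √(1 + ω²·cot²ϑ)) · √(1 + ω²·cot²ϑ) ] is integrable on the interval (0, π/2). -/
/-!
The integrand is bounded on `(0, π/2)`, not singular at `0`: `ϑ cot ϑ ≤ 1` (since `ϑ < tan ϑ`),
`csc²ϑ = 1 + cot²ϑ`, and with `q = √(1 + ω² cot²ϑ) ≥ 1` the denominator satisfies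
`(s + q) q ≥ min 1 (1 + s) · q² ≥ min 1 (1 + s) · min 1 ω² · (1 + cot²ϑ)`.
A bounded measurable function is integrable on the bounded interval `(0, π/2)`.
-/

open Real MeasureTheory

lemma Real.mul_cos_div_sin_le_one {x : ℝ} (hx0 : 0 < x) (hx : x < π / 2) :
    x * (cos x / sin x) ≤ 1 := by
  have hsin : 0 < sin x := sin_pos_of_pos_of_lt_pi hx0 (by linarith [pi_pos])
  have hcos : 0 < cos x := cos_pos_of_mem_Ioo ⟨by linarith [pi_pos], hx⟩
  have htan : x * cos x < sin x := by
    simpa [tan_eq_sin_div_cos, lt_div_iff₀ hcos] using lt_tan hx0 hx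
  rw [← mul_div_assoc, div_le_one hsin]
  exact htan.le

lemma Real.one_div_sin_sq_eq_one_add_cos_div_sin_sq {x : ℝ} (hx : sin x ≠ 0) :
    1 / sin x ^ 2 = 1 + (cos x / sin x) ^ 2 := by
  field_simp
  linarith [sin_sq_add_cos_sq x]

lemma min_one_mul_one_add_sq_le (ω t : ℝ) :
    min 1 (ω ^ 2) * (1 + t ^ 2) ≤ 1 + ω ^ 2 * t ^ 2 := by
  nlinarith [min_le_left 1 (ω ^ 2), min_le_right 1 (ω ^ 2), sq_nonneg t]

lemma min_one_one_add_mul_sq_le {s q : ℝ} (hq : 1 ≤ q) :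
    min 1 (1 + s) * q ^ 2 ≤ (s + q) * q := by
  rcases le_or_gt s 0 with hs0 | hs0
  · nlinarith [mul_le_mul_of_nonneg_right (min_le_right 1 (1 + s)) (sq_nonneg q),
      mul_nonneg (neg_nonneg.mpr hs0) (show 0 ≤ q ^ 2 - q by nlinarith)]
  · nlinarith [mul_le_mul_of_nonneg_right (min_le_left 1 (1 + s)) (sq_nonneg q)]

lemma abs_mul_one_add_sq_div_le {s ω a t : ℝ} (hs : -1 < s) (hω : ω ≠ 0)
    (ha0 : 0 ≤ a) (ha1 : a ≤ 1) :
    |a * (1 + t ^ 2) / ((s + √(1 + ω ^ 2 * t ^ 2)) * √(1 + ω ^ 2 * t ^ 2))| ≤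
      1 / (min 1 (1 + s) * min 1 (ω ^ 2)) := by
  set q := √(1 + ω ^ 2 * t ^ 2)
  have hq : 1 ≤ q := one_le_sqrt.mpr (by nlinarith [sq_nonneg (ω * t)])
  have hq_sq : q ^ 2 = 1 + ω ^ 2 * t ^ 2 := sq_sqrt (by positivity)
  have hc₁ : 0 < min 1 (1 + s) := lt_min one_pos (by linarith)
  have hc₂ : 0 < min 1 (ω ^ 2) := lt_min one_pos (by positivity)
  have hden : min 1 (1 + s) * min 1 (ω ^ 2) * (1 + t ^ 2) ≤ (s + q) * q :=
    calc min 1 (1 + s) * min 1 (ω ^ 2) * (1 + t ^ 2)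
        = min 1 (1 + s) * (min 1 (ω ^ 2) * (1 + t ^ 2)) := mul_assoc _ _ _
      _ ≤ min 1 (1 + s) * q ^ 2 := by
          rw [hq_sq]; exact mul_le_mul_of_nonneg_left (min_one_mul_one_add_sq_le ω t) hc₁.le
      _ ≤ (s + q) * q := min_one_one_add_mul_sq_le hq
  rw [abs_of_nonneg (div_nonneg (by positivity) (le_trans (by positivity) hden))]
  calc a * (1 + t ^ 2) / ((s + q) * q)
      ≤ 1 * (1 + t ^ 2) / (min 1 (1 + s) * min 1 (ω ^ 2) * (1 + t ^ 2)) :=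
        div_le_div₀ (by positivity) (by gcongr) (by positivity) hden
    _ = 1 / (min 1 (1 + s) * min 1 (ω ^ 2)) := by field_simp

theorem wiener_hopf_integrand_integrable_general (ω : ℝ) (hω0 : 0 < ω)
    (s : ℝ) (hs : -1 < s) :
    IntegrableOn (fun x : ℝ =>
        x * (Real.cos x / Real.sin x) * (1 / Real.sin x ^ 2) /
          ((s + Real.sqrt (1 + ω ^ 2 * (Real.cos x / Real.sin x) ^ 2)) *
            Real.sqrt (1 + ω ^ 2 * (Real.cos x / Real.sin x) ^ 2)))
      (Set.Ioo 0 (π / 2)) := by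
  refine Measure.integrableOn_of_bounded (M := 1 / (min 1 (1 + s) * min 1 (ω ^ 2)))
    measure_Ioo_lt_top.ne (Measurable.aestronglyMeasurable (by fun_prop)) (ae_restrict_of_forall_mem measurableSet_Ioo ?_)
  rintro x ⟨hx0, hx⟩
  have hsin : 0 < sin x := sin_pos_of_pos_of_lt_pi hx0 (by linarith [pi_pos])
  have hcos : 0 < cos x := cos_pos_of_mem_Ioo ⟨by linarith [pi_pos], hx⟩
  rw [Real.norm_eq_abs, one_div_sin_sq_eq_one_add_cos_div_sin_sq hsin.ne']
  exact abs_mul_one_add_sq_div_le hs hω0.ne' (by positivity) (mul_cos_div_sin_le_one hx0 hx)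

/-- Integrability of the Wiener-Hopf factor exponent integrand (second line of
Eq. (32)): for `0 < ω < 1` and `s > -1`, the function
`ϑ ↦ ϑ cot ϑ csc²ϑ / ((s+√(1+ω²cot²ϑ))√(1+ω²cot²ϑ))` is integrable on
`(0, π/2)`. -/
theorem wiener_hopf_integrand_integrable (ω : ℝ) (hω0 : 0 < ω) (hω1 : ω < 1)
    (s : ℝ) (hs : -1 < s) :
    IntegrableOn (fun x : ℝ =>
        x * (Real.cos x / Real.sin x) * (1 / Real.sin x ^ 2) /
          ((s + Real.sqrt (1 + ω ^ 2 * (Real.cos x / Real.sin x) ^ 2)) *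
            Real.sqrt (1 + ω ^ 2 * (Real.cos x / Real.sin x) ^ 2)))
      (Set.Ioo 0 (π / 2)) :=
  wiener_hopf_integrand_integrable_general ω hω0 s hs
end
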